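/- arXiv:1210.7697 — 3 statements merged into one kernel-verified Lean document; each statement's English description precedes it below -/
import Mathlib

section
/- Let a, i, j be integers with 0 ≤ a ≤ i−j. The partially ordered set (P(a,i,j), ⊑) is a finite lattice (every pair of elements has a least upper bound and a greatest lower bound), with least element (0,i) and greatest element (a,j). -/
/-- The set `P(a,i,j) = {(b,k) : 0 ≤ b ≤ a and a - b + j ≤ k ≤ i - b}`,
parametrizing the factorizations of the morphism `(a, x̄, i, j)` of `C_m`. -/
def Pset (a i j : ℤ) : Set (ℤ × ℤ) :=
  {p | 0 ≤ p.1 ∧ p.1 ≤ a ∧ a - p.1 + j ≤ p.2 ∧ p.2 ≤ i - p.1}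

/-- The Lawvere-interval order on `P(a,i,j)`:
`(b₁,k₁) ⊑ (b₂,k₂) ↔ b₁ ≤ b₂ ∧ b₂ - b₁ ≤ k₁ - k₂`. -/
def Prel (p q : ℤ × ℤ) : Prop :=
  p.1 ≤ q.1 ∧ q.1 - p.1 ≤ p.2 - q.2

/-- The poset `(P(a,i,j), ⊑)` is a finite lattice with least element `(0, i)`
and greatest element `(a, j)`: it is a finite set, `(0,i)` (resp. `(a,j)`)
belongs to it and is a lower (resp. upper) bound, and every pair of elements
has a least upper bound and a greatest lower bound in `P(a,i,j)`. -/
theorem stmt7 (a i j : ℤ) (h0 : 0 ≤ a) (h1 : a ≤ i - j) :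
    (Pset a i j).Finite ∧
    ((0, i) ∈ Pset a i j ∧ ∀ p ∈ Pset a i j, Prel (0, i) p) ∧
    ((a, j) ∈ Pset a i j ∧ ∀ p ∈ Pset a i j, Prel p (a, j)) ∧
    (∀ p ∈ Pset a i j, ∀ q ∈ Pset a i j, ∃ s ∈ Pset a i j,
      Prel p s ∧ Prel q s ∧ ∀ t ∈ Pset a i j, Prel p t → Prel q t → Prel s t) ∧
    (∀ p ∈ Pset a i j, ∀ q ∈ Pset a i j, ∃ s ∈ Pset a i j,
      Prel s p ∧ Prel s q ∧ ∀ t ∈ Pset a i j, Prel t p → Prel t q → Prel t s) := by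
  refine ⟨?_, ⟨?_, ?_⟩, ⟨?_, ?_⟩, ?_, ?_⟩
  · apply Set.Finite.subset ((Set.finite_Icc 0 a).prod (Set.finite_Icc j i))
    rintro ⟨b, k⟩ ⟨hb0, hba, hk1, hk2⟩
    simp only [Set.mem_prod, Set.mem_Icc] at *
    constructor <;> constructor <;> omega
  · exact ⟨le_refl 0, h0, by omega, by omega⟩
  · rintro ⟨b, k⟩ ⟨hb0, hba, hk1, hk2⟩
    exact ⟨hb0, by simpa using by omega⟩
  · exact ⟨h0, le_refl a, by omega, by omega⟩
  · rintro ⟨b, k⟩ ⟨hb0, hba, hk1, hk2⟩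
    exact ⟨hba, by simpa using by omega⟩
  · rintro ⟨b1, k1⟩ ⟨hb0, hba, hk1, hk2⟩ ⟨b2, k2⟩ ⟨hb0', hba', hk1', hk2'⟩
    refine ⟨(max b1 b2, min (b1 + k1) (b2 + k2) - max b1 b2), ?_, ?_, ?_, ?_⟩
    · refine ⟨?_, ?_, ?_, ?_⟩ <;> simp only [le_max_iff, max_le_iff, le_min_iff,
        min_le_iff] at * <;> omega
    · refine ⟨?_, ?_⟩ <;> simp only [le_max_iff, max_le_iff, le_min_iff,
        min_le_iff] at * <;> omega
    · refine ⟨?_, ?_⟩ <;> simp only [le_max_iff, max_le_iff, le_min_iff,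
        min_le_iff] at * <;> omega
    · rintro ⟨b3, k3⟩ _ ⟨hp1, hp2⟩ ⟨hq1, hq2⟩
      refine ⟨?_, ?_⟩ <;> simp only [le_max_iff, max_le_iff, le_min_iff,
        min_le_iff] at * <;> omega
  · rintro ⟨b1, k1⟩ ⟨hb0, hba, hk1, hk2⟩ ⟨b2, k2⟩ ⟨hb0', hba', hk1', hk2'⟩
    refine ⟨(min b1 b2, max (b1 + k1) (b2 + k2) - min b1 b2), ?_, ?_, ?_, ?_⟩
    · refine ⟨?_, ?_, ?_, ?_⟩ <;> simp only [le_max_iff, max_le_iff, le_min_iff,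
        min_le_iff] at * <;> omega
    · refine ⟨?_, ?_⟩ <;> simp only [le_max_iff, max_le_iff, le_min_iff,
        min_le_iff] at * <;> omega
    · refine ⟨?_, ?_⟩ <;> simp only [le_max_iff, max_le_iff, le_min_iff,
        min_le_iff] at * <;> omega
    · rintro ⟨b3, k3⟩ _ ⟨hp1, hp2⟩ ⟨hq1, hq2⟩
      refine ⟨?_, ?_⟩ <;> simp only [le_max_iff, max_le_iff, le_min_iff,
        min_le_iff] at * <;> omega
end

section
/- Let a, i, j be integers with 0 ≤ a ≤ i−j, and set n = i−j−a. The map (b,k) ↦ (b, k−(a−b+j)) is an order isomorphism from the poset (P(a,i,j), ⊑) onto the product poset {0,1,…,a} × {0,1,…,n}ᵒᵖ, where {0,1,…,a} carries the usual order of integers and {0,1,…,n}ᵒᵖ carries the reversed order. -/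
/-- With `n = i - j - a`, the map `(b, k) ↦ (b, k - (a - b + j))` is an order
isomorphism from `(P(a,i,j), ⊑)` onto the product poset
`{0,…,a} × {0,…,n}ᵒᵖ`: it is a bijection of `P(a,i,j)` onto
`[0,a] × [0,n]`, and `p ⊑ q` holds iff the first coordinates of the images are
related by the usual order of `ℤ` and the second coordinates by the reversed
order. -/
theorem stmt8 (a i j : ℤ) (h0 : 0 ≤ a) (h1 : a ≤ i - j) :
    Set.BijOn (fun p : ℤ × ℤ => (p.1, p.2 - (a - p.1 + j)))
      (Pset a i j) (Set.Icc (0 : ℤ) a ×ˢ Set.Icc (0 : ℤ) (i - j - a)) ∧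
    ∀ p ∈ Pset a i j, ∀ q ∈ Pset a i j,
      (Prel p q ↔
        (p.1 ≤ q.1 ∧ q.2 - (a - q.1 + j) ≤ p.2 - (a - p.1 + j))) := by
  refine ⟨⟨?_, ?_, ?_⟩, ?_⟩
  · rintro ⟨b, k⟩ ⟨hb0, hba, hk1, hk2⟩
    simp only [Set.mem_prod, Set.mem_Icc]
    constructor <;> constructor <;> omega
  · rintro ⟨b, k⟩ _ ⟨b', k'⟩ _ h
    simp only [Prod.mk.injEq] at h
    have : b = b' := h.1
    subst this
    have : k = k' := by omega
    simp [this]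
  · rintro ⟨b, m⟩ hbm
    simp only [Set.mem_prod, Set.mem_Icc] at hbm
    refine ⟨(b, m + (a - b + j)), ?_, ?_⟩
    · exact ⟨by omega, by omega, by omega, by omega⟩
    · simp
  · rintro ⟨b, k⟩ _ ⟨b', k'⟩ _
    unfold Prel
    constructor <;> rintro ⟨h1, h2⟩ <;> exact ⟨h1, by omega⟩
end

section
/- Let a, i, j be integers with 0 ≤ a ≤ i−j, and let μ_P denote the Möbius function (over ℤ) of the finite partially ordered set (P(a,i,j), ⊑). Then μ_P((0,i),(a,j)) equals: 1 if (a=0 and j=i) or (a=1 and j=i−2); −1 if (a=0 and j=i−1) or (a=1 and j=i−1); and 0 otherwise. -/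
instance (p q : ℤ × ℤ) : Decidable (Prel p q) :=
  inferInstanceAs (Decidable (p.1 ≤ q.1 ∧ q.1 - p.1 ≤ p.2 - q.2))

/-- The set `P(a,i,j)` as a finset. -/
noncomputable def Pfin (a i j : ℤ) : Finset (ℤ × ℤ) :=
  (Finset.Icc 0 a ×ˢ Finset.Icc j i).filter
    (fun p => a - p.1 + j ≤ p.2 ∧ p.2 ≤ i - p.1)

lemma mem_Pfin {a i j : ℤ} {p : ℤ × ℤ} :
    p ∈ Pfin a i j ↔ 0 ≤ p.1 ∧ p.1 ≤ a ∧ a - p.1 + j ≤ p.2 ∧ p.2 ≤ i - p.1 := by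
  simp only [Pfin, Finset.mem_filter, Finset.mem_product, Finset.mem_Icc]
  omega

def chi (m : ℤ) : ℤ := if m = 0 then 1 else if m = 1 then -1 else 0

lemma sum_chi (m : ℤ) (hm : 0 ≤ m) :
    ∑ x ∈ Finset.Icc 0 m, chi x = if m = 0 then 1 else 0 := by
  have h : ∀ x : ℤ, chi x = (if x = 0 then (1:ℤ) else 0) + (if x = 1 then (-1:ℤ) else 0) := by
    intro x; unfold chi; split_ifs <;> omega
  rw [Finset.sum_congr rfl (fun x _ => h x), Finset.sum_add_distrib,
    Finset.sum_ite_eq' (Finset.Icc 0 m) 0 (fun _ => (1:ℤ)),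
    Finset.sum_ite_eq' (Finset.Icc 0 m) 1 (fun _ => (-1:ℤ))]
  simp only [Finset.mem_Icc]
  split_ifs <;> omega

lemma interval_sum (a i j : ℤ) (q : ℤ × ℤ) (hq : q ∈ Pfin a i j)
    (hpq : Prel (0, i) q) :
    ∑ z ∈ (Pfin a i j).filter (fun z => Prel (0, i) z ∧ Prel z q),
      chi z.1 * chi (i - z.1 - z.2)
    = (if q.1 = 0 then 1 else 0) * (if i - q.1 - q.2 = 0 then 1 else 0) := by
  rw [mem_Pfin] at hq
  obtain ⟨hq1, hq2, hq3, hq4⟩ := hq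
  obtain ⟨hpq1, hpq2⟩ := hpq
  have key : ∑ z ∈ (Pfin a i j).filter (fun z => Prel (0, i) z ∧ Prel z q),
      chi z.1 * chi (i - z.1 - z.2)
      = ∑ p ∈ Finset.Icc 0 q.1 ×ˢ Finset.Icc 0 (i - q.1 - q.2), chi p.1 * chi p.2 := by
    apply Finset.sum_nbij' (fun z => (z.1, i - z.1 - z.2)) (fun p => (p.1, i - p.1 - p.2))
    · intro z hz
      rw [Finset.mem_filter, mem_Pfin] at hz
      simp only [Prel] at hz
      simp only [Finset.mem_product, Finset.mem_Icc]
      omega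
    · intro p hp
      simp only [Finset.mem_product, Finset.mem_Icc] at hp
      rw [Finset.mem_filter, mem_Pfin]
      simp only [Prel]
      omega
    · intro z _; simp
    · intro p _; simp
    · intro z _; simp
  rw [key, ← sum_chi q.1 hq1, ← sum_chi (i - q.1 - q.2) (by omega)]
  rw [Finset.sum_mul_sum]
  rw [← Finset.sum_product']


/-- Computation of the Möbius function of the finite poset `(P(a,i,j), ⊑)`:
if `M` satisfies the defining recursion of the Möbius function
(`M p p = 1` and `∑_{p ⊑ z ⊑ q} M p z = 0` for `p ⊏ q`), then `M` evaluated at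
the pair (least element `(0,i)`, greatest element `(a,j)`) is `1` if
(`a = 0` and `j = i`) or (`a = 1` and `j = i - 2`), `-1` if (`a = 0` and
`j = i - 1`) or (`a = 1` and `j = i - 1`), and `0` otherwise. -/
theorem stmt9 (a i j : ℤ) (h0 : 0 ≤ a) (h1 : a ≤ i - j)
    (M : ℤ × ℤ → ℤ × ℤ → ℤ)
    (hdiag : ∀ p ∈ Pfin a i j, M p p = 1)
    (hrec : ∀ p ∈ Pfin a i j, ∀ q ∈ Pfin a i j, Prel p q → p ≠ q →
      ∑ z ∈ (Pfin a i j).filter (fun z => Prel p z ∧ Prel z q), M p z = 0) :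
    M (0, i) (a, j) =
      if (a = 0 ∧ j = i) ∨ (a = 1 ∧ j = i - 2) then 1
      else if (a = 0 ∧ j = i - 1) ∨ (a = 1 ∧ j = i - 1) then -1
      else 0 := by
  have hbot : (0, i) ∈ Pfin a i j := by rw [mem_Pfin]; simp; omega
  have key : ∀ n : ℕ, ∀ q ∈ Pfin a i j, Prel (0, i) q → (i - q.2).toNat = n →
      M (0, i) q = chi q.1 * chi (i - q.1 - q.2) := by
    intro n
    induction n using Nat.strong_induction_on with
    | _ n ih =>
      intro q hq hpq hn
      by_cases hq0 : q = (0, i)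
      · subst hq0
        rw [hdiag _ hbot]
        simp [chi]
      · have hrecq := hrec (0, i) hbot q hq hpq (fun h => hq0 h.symm)
        set S := (Pfin a i j).filter (fun z => Prel (0, i) z ∧ Prel z q) with hS
        have hqS : q ∈ S := by
          rw [hS, Finset.mem_filter]
          exact ⟨hq, hpq, le_refl q.1, by omega⟩
        have split := Finset.add_sum_erase S (M (0, i)) hqS
        have hMz : ∀ z ∈ S.erase q, M (0, i) z = chi z.1 * chi (i - z.1 - z.2) := by
          intro z hz
          rw [Finset.mem_erase] at hz
          obtain ⟨hzq, hzS⟩ := hz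
          rw [hS, Finset.mem_filter] at hzS
          obtain ⟨hzP, hz1, hz2⟩ := hzS
          apply ih ((i - z.2).toNat) _ z hzP hz1 rfl
          rw [mem_Pfin] at hzP hq
          obtain ⟨hzp1, hzp2⟩ := hz2
          have hne : z.2 ≠ q.2 ∨ z.1 ≠ q.1 := by
            by_contra h
            push_neg at h
            exact hzq (Prod.ext h.2 h.1)
          have : q.2 < z.2 := by
            rcases hne with h | h
            · omega
            · omega
          omega
        have hsum_erase : ∑ z ∈ S.erase q, M (0, i) z
            = ∑ z ∈ S.erase q, chi z.1 * chi (i - z.1 - z.2) :=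
          Finset.sum_congr rfl hMz
        have hchisum := interval_sum a i j q hq hpq
        rw [← hS] at hchisum
        have hchisplit := Finset.add_sum_erase S (fun z => chi z.1 * chi (i - z.1 - z.2)) hqS
        have hzero : (if q.1 = 0 then (1:ℤ) else 0) * (if i - q.1 - q.2 = 0 then (1:ℤ) else 0) = 0 := by
          have : q.1 ≠ 0 ∨ i - q.1 - q.2 ≠ 0 := by
            by_contra h
            push_neg at h
            exact hq0 (Prod.ext h.1 (by omega))
          rcases this with h | h <;> simp [h]
        rw [hchisum, hzero] at hchisplit
        rw [hrecq] at split
        -- split : M (0,i) q + ∑ erase M = 0 ; hchisplit : chi... + ∑ erase chi = 0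
        have h2 : chi q.1 * chi (i - q.1 - q.2)
            + ∑ z ∈ S.erase q, chi z.1 * chi (i - z.1 - z.2) = 0 := hchisplit
        rw [hsum_erase] at split
        omega
  have hqtop : (a, j) ∈ Pfin a i j := by rw [mem_Pfin]; simp; omega
  have := key ((i - j).toNat) (a, j) hqtop ⟨by simpa, by simp; omega⟩ rfl
  rw [this]
  simp only [chi]
  split_ifs <;> omega
end
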